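/- Forward and backward slicing for the simple expression language form a Galois connection: if e ⇒ v, then for all e' ⊑ e and v' ⊑ v, bwd_e(v') ⊑ e' if and only if v' ⊑ fwd_e(e'). -/
import Mathlib


/-- Partial expressions of the simple language, with holes. -/
inductive Expr where
  | hole : Expr
  | num : ℕ → Expr
  | add : Expr → Expr → Expr
  | pair : Expr → Expr → Expr
  | fst : Expr → Expr
  | snd : Expr → Expr
deriving DecidableEq

/-- The prefix relation ⊑ on partial expressions. -/
inductive Sq : Expr → Expr → Prop where
  | hole : ∀ e, Sq Expr.hole e
  | num : ∀ n, Sq (Expr.num n) (Expr.num n)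
  | add : ∀ {a a' b b'}, Sq a a' → Sq b b' → Sq (Expr.add a b) (Expr.add a' b')
  | pair : ∀ {a a' b b'}, Sq a a' → Sq b b' → Sq (Expr.pair a b) (Expr.pair a' b')
  | fst : ∀ {a a'}, Sq a a' → Sq (Expr.fst a) (Expr.fst a')
  | snd : ∀ {a a'}, Sq a a' → Sq (Expr.snd a) (Expr.snd a')

/-- Partial values, with holes. -/
inductive Val where
  | hole : Val
  | num : ℕ → Val
  | pair : Val → Val → Val
deriving DecidableEq

/-- The prefix relation ⊑ on partial values. -/
inductive VSq : Val → Val → Prop where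
  | hole : ∀ v, VSq Val.hole v
  | num : ∀ n, VSq (Val.num n) (Val.num n)
  | pair : ∀ {a a' b b'}, VSq a a' → VSq b b' → VSq (Val.pair a b) (Val.pair a' b')

/-- Big-step evaluation. -/
inductive Eval : Expr → Val → Prop where
  | num : ∀ n, Eval (Expr.num n) (Val.num n)
  | add : ∀ {a b n m}, Eval a (Val.num n) → Eval b (Val.num m) →
      Eval (Expr.add a b) (Val.num (n + m))
  | pair : ∀ {a b va vb}, Eval a va → Eval b vb →
      Eval (Expr.pair a b) (Val.pair va vb)
  | fst : ∀ {a v₁ v₂}, Eval a (Val.pair v₁ v₂) → Eval (Expr.fst a) v₁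
  | snd : ∀ {a v₁ v₂}, Eval a (Val.pair v₁ v₂) → Eval (Expr.snd a) v₂

/-- Forward slicing: evaluation extended with hole propagation. -/
inductive Fwd : Expr → Val → Prop where
  | hole : Fwd Expr.hole Val.hole
  | num : ∀ n, Fwd (Expr.num n) (Val.num n)
  | add : ∀ {a b n m}, Fwd a (Val.num n) → Fwd b (Val.num m) →
      Fwd (Expr.add a b) (Val.num (n + m))
  | addHoleL : ∀ {a b}, Fwd a Val.hole → Fwd (Expr.add a b) Val.hole
  | addHoleR : ∀ {a b v}, Fwd a v → Fwd b Val.hole → Fwd (Expr.add a b) Val.hole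
  | pair : ∀ {a b va vb}, Fwd a va → Fwd b vb →
      Fwd (Expr.pair a b) (Val.pair va vb)
  | fst : ∀ {a v₁ v₂}, Fwd a (Val.pair v₁ v₂) → Fwd (Expr.fst a) v₁
  | fstHole : ∀ {a}, Fwd a Val.hole → Fwd (Expr.fst a) Val.hole
  | snd : ∀ {a v₁ v₂}, Fwd a (Val.pair v₁ v₂) → Fwd (Expr.snd a) v₂
  | sndHole : ∀ {a}, Fwd a Val.hole → Fwd (Expr.snd a) Val.hole

/-- Forward slicing as a total function (returns hole when stuck). -/
def fwdF : Expr → Val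
  | Expr.hole => Val.hole
  | Expr.num n => Val.num n
  | Expr.add a b =>
    match fwdF a, fwdF b with
    | Val.num n, Val.num m => Val.num (n + m)
    | _, _ => Val.hole
  | Expr.pair a b => Val.pair (fwdF a) (fwdF b)
  | Expr.fst a =>
    match fwdF a with
    | Val.pair v _ => v
    | _ => Val.hole
  | Expr.snd a =>
    match fwdF a with
    | Val.pair _ v => v
    | _ => Val.hole

/-- Backward slicing, by structural recursion on the original expression. -/
def bwd : Expr → Val → Expr
  | _, Val.hole => Expr.hole
  | Expr.num n, _ => Expr.num n
  | Expr.pair a b, Val.pair va vb => Expr.pair (bwd a va) (bwd b vb)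
  | Expr.fst a, v => Expr.fst (bwd a (Val.pair v Val.hole))
  | Expr.snd a, v => Expr.snd (bwd a (Val.pair Val.hole v))
  | Expr.add a b, _ => Expr.add (bwd a (fwdF a)) (bwd b (fwdF b))
  | _, _ => Expr.hole

lemma bwd_hole (e : Expr) : bwd e Val.hole = Expr.hole := by
  cases e <;> rfl

lemma eval_fwdF : ∀ {e v}, Eval e v → fwdF e = v := by
  intro e v h
  induction h <;> simp [fwdF, *]

lemma vsq_num_inv {n w} : VSq (Val.num n) w → w = Val.num n := by
  intro h; cases h; rfl

lemma vsq_pair_inv {a b w} : VSq (Val.pair a b) w →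
    ∃ x y, w = Val.pair x y ∧ VSq a x ∧ VSq b y := by
  intro h; cases h; exact ⟨_, _, rfl, ‹_›, ‹_›⟩

lemma fwdF_mono : ∀ {e' e}, Sq e' e → VSq (fwdF e') (fwdF e) := by
  intro e' e h
  induction h with
  | hole => exact VSq.hole _
  | num n => exact VSq.num n
  | @add a a' b b' ha hb iha ihb =>
    cases hA : fwdF a <;> rw [hA] at iha
    · simp only [fwdF, hA]; exact VSq.hole _
    · have hA' := vsq_num_inv iha
      cases hB : fwdF b <;> rw [hB] at ihb
      · simp only [fwdF, hA, hB]; exact VSq.hole _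
      · have hB' := vsq_num_inv ihb
        simp only [fwdF, hA, hB, hA', hB']
        exact VSq.num _
      · simp only [fwdF, hA, hB]; exact VSq.hole _
    · simp only [fwdF, hA]; exact VSq.hole _
  | pair ha hb iha ihb => exact VSq.pair iha ihb
  | @fst a a' ha iha =>
    cases hA : fwdF a <;> rw [hA] at iha
    · simp only [fwdF, hA]; exact VSq.hole _
    · simp only [fwdF, hA]; exact VSq.hole _
    · obtain ⟨x, y, hE, h1, h2⟩ := vsq_pair_inv iha
      simp only [fwdF, hA, hE]; exact h1
  | @snd a a' ha iha =>
    cases hA : fwdF a <;> rw [hA] at iha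
    · simp only [fwdF, hA]; exact VSq.hole _
    · simp only [fwdF, hA]; exact VSq.hole _
    · obtain ⟨x, y, hE, h1, h2⟩ := vsq_pair_inv iha
      simp only [fwdF, hA, hE]; exact h2

lemma bwd_fst (a : Expr) (v : Val) (h : v ≠ Val.hole) :
    bwd (Expr.fst a) v = Expr.fst (bwd a (Val.pair v Val.hole)) := by
  cases v with
  | hole => exact absurd rfl h
  | num _ => rfl
  | pair _ _ => rfl

lemma bwd_snd (a : Expr) (v : Val) (h : v ≠ Val.hole) :
    bwd (Expr.snd a) v = Expr.snd (bwd a (Val.pair Val.hole v)) := by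
  cases v with
  | hole => exact absurd rfl h
  | num _ => rfl
  | pair _ _ => rfl

lemma bwd_add' (a b : Expr) (k : ℕ) :
    bwd (Expr.add a b) (Val.num k) = Expr.add (bwd a (fwdF a)) (bwd b (fwdF b)) := rfl

theorem slicing_galois_connection :
    ∀ e v e' v', Eval e v → Sq e' e → VSq v' v →
      (Sq (bwd e v') e' ↔ VSq v' (fwdF e')) := by
  intro e v e' v' hev
  induction hev generalizing e' v' with
  | num n =>
    intro hsq hvsq
    cases hvsq with
    | hole => exact ⟨fun _ => VSq.hole _, fun _ => (by rw [bwd_hole]; exact Sq.hole _)⟩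
    | num =>
      cases hsq with
      | hole => exact ⟨fun h => (by cases h), fun h => (by cases h)⟩
      | num => exact ⟨fun _ => VSq.num n, fun _ => Sq.num n⟩
  | @add a b n m ha hb iha ihb =>
    intro hsq hvsq
    cases hvsq with
    | hole => exact ⟨fun _ => VSq.hole _, fun _ => (by rw [bwd_hole]; exact Sq.hole _)⟩
    | num =>
      have hfa := eval_fwdF ha
      have hfb := eval_fwdF hb
      cases hsq with
      | hole =>
        rw [bwd_add']
        exact ⟨fun h => (by cases h), fun h => (by cases h)⟩
      | @add a' _ b' _ hsa hsb =>
        rw [bwd_add', hfa, hfb]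
        have ih1 := iha a' (Val.num n) hsa (VSq.num n)
        have ih2 := ihb b' (Val.num m) hsb (VSq.num m)
        have hma := fwdF_mono hsa; rw [hfa] at hma
        have hmb := fwdF_mono hsb; rw [hfb] at hmb
        cases hA : fwdF a' <;> rw [hA] at hma ih1
        · simp only [fwdF, hA]
          constructor
          · intro h
            cases h with
            | add h1 h2 => exact absurd (ih1.mp h1) (fun hc => by cases hc)
          · intro h; cases h
        · cases hma
          cases hB : fwdF b' <;> rw [hB] at hmb ih2
          · simp only [fwdF, hA, hB]
            constructor
            · intro h
              cases h with
              | add h1 h2 => exact absurd (ih2.mp h2) (fun hc => by cases hc)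
            · intro h; cases h
          · cases hmb
            simp only [fwdF, hA, hB]
            constructor
            · intro _; exact VSq.num _
            · intro _; exact Sq.add (ih1.mpr (VSq.num n)) (ih2.mpr (VSq.num m))
          · cases hmb
        · cases hma
  | @pair a b va vb ha hb iha ihb =>
    intro hsq hvsq
    cases hvsq with
    | hole => exact ⟨fun _ => VSq.hole _, fun _ => (by rw [bwd_hole]; exact Sq.hole _)⟩
    | @pair va' _ vb' _ h1 h2 =>
      cases hsq with
      | hole => exact ⟨fun h => (by cases h), fun h => (by cases h)⟩
      | @pair a' _ b' _ hsa hsb =>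
        have i1 := iha a' va' hsa h1
        have i2 := ihb b' vb' hsb h2
        constructor
        · intro h
          cases h with
          | pair g1 g2 => exact VSq.pair (i1.mp g1) (i2.mp g2)
        · intro h
          cases h with
          | pair g1 g2 => exact Sq.pair (i1.mpr g1) (i2.mpr g2)
  | @fst a v₁ v₂ ha iha =>
    intro hsq hvsq
    by_cases hv : v' = Val.hole
    · subst hv
      exact ⟨fun _ => VSq.hole _, fun _ => (by rw [bwd_hole]; exact Sq.hole _)⟩
    · rw [bwd_fst _ _ hv]
      cases hsq with
      | hole =>
        constructor
        · intro h; cases h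
        · intro h; cases h; exact absurd rfl hv
      | @fst a' _ hsa =>
        have ih := iha a' (Val.pair v' Val.hole) hsa (VSq.pair hvsq (VSq.hole v₂))
        have hm := fwdF_mono hsa; rw [eval_fwdF ha] at hm
        cases hA : fwdF a' <;> rw [hA] at hm ih
        · simp only [fwdF, hA]
          constructor
          · intro h
            cases h with
            | fst g => exact absurd (ih.mp g) (fun hc => by cases hc)
          · intro h; cases h; exact absurd rfl hv
        · cases hm
        · rename_i w1 w2
          simp only [fwdF, hA]
          constructor
          · intro h
            cases h with
            | fst g =>
              have hp := ih.mp g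
              cases hp with
              | pair p q => exact p
          · intro h; exact Sq.fst (ih.mpr (VSq.pair h (VSq.hole w2)))
  | @snd a v₁ v₂ ha iha =>
    intro hsq hvsq
    by_cases hv : v' = Val.hole
    · subst hv
      exact ⟨fun _ => VSq.hole _, fun _ => (by rw [bwd_hole]; exact Sq.hole _)⟩
    · rw [bwd_snd _ _ hv]
      cases hsq with
      | hole =>
        constructor
        · intro h; cases h
        · intro h; cases h; exact absurd rfl hv
      | @snd a' _ hsa =>
        have ih := iha a' (Val.pair Val.hole v') hsa (VSq.pair (VSq.hole v₁) hvsq)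
        have hm := fwdF_mono hsa; rw [eval_fwdF ha] at hm
        cases hA : fwdF a' <;> rw [hA] at hm ih
        · simp only [fwdF, hA]
          constructor
          · intro h
            cases h with
            | snd g => exact absurd (ih.mp g) (fun hc => by cases hc)
          · intro h; cases h; exact absurd rfl hv
        · cases hm
        · rename_i w1 w2
          simp only [fwdF, hA]
          constructor
          · intro h
            cases h with
            | snd g =>
              have hp := ih.mp g
              cases hp with
              | pair p q => exact q
          · intro h; exact Sq.snd (ih.mpr (VSq.pair (VSq.hole w1) h))
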